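/- arXiv:1501.01225 — 4 statements merged into one kernel-verified Lean document; each statement's English description precedes it below -/
import Mathlib

section
/- Let 𝒜 be a finite arrangement of hyperplanes H_{ij}^a = {x_i - x_j = a} (a > 0) in V = {x : Σx_i = 0}, G = G_𝒜 the associated oriented multigraph with multiplicity m_{ij} = #{a : H_{ij}^a ∈ 𝒜}, and for a point r in the complement of 𝒜 define λ_r(i) = #{H_{ij}^a ∈ 𝒜 : r_i - r_j > a}. Then λ_r is a G-parking function. -/
open scoped Classical

open Finset

theorem Finset.sum_card_filter_and_eq {α β : Type*} [DecidableEq β] (s : Finset α) (p : α → Prop)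
    [DecidablePred p] (f : α → β) (t : Finset β) :
    ∑ b ∈ t, #(s.filter fun a => p a ∧ f a = b) = #(s.filter fun a => p a ∧ f a ∈ t) := by
  rw [card_eq_sum_card_fiberwise (f := f) (t := t) fun a ha => (mem_filter.mp ha).2.2]
  refine sum_congr rfl fun b hb => congrArg card ?_
  ext a
  simp only [mem_filter]
  constructor
  · rintro ⟨ha, hp, rfl⟩
    exact ⟨⟨ha, hp, hb⟩, rfl⟩
  · rintro ⟨⟨ha, hp, -⟩, rfl⟩
    exact ⟨ha, hp, rfl⟩

/-- Since `a > 0`, `r_i - r_j > a` forces `r_j < r_i`, so `j ∉ I` when `r_i` is minimal on `I`. -/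
theorem filter_sub_gt_subset_filter_mem_compl {n : ℕ} (A : Finset (Fin n × Fin n × ℝ))
    (hpos : ∀ h ∈ A, 0 < h.2.2) (r : Fin n → ℝ) (I : Finset (Fin n)) (i : Fin n)
    (hmin : ∀ j ∈ I, r i ≤ r j) :
    A.filter (fun h => h.1 = i ∧ r h.1 - r h.2.1 > h.2.2) ⊆
      A.filter (fun h => h.1 = i ∧ h.2.1 ∈ Iᶜ) := by
  intro h hh
  obtain ⟨hA, rfl, hgt⟩ := mem_filter.mp hh
  refine mem_filter.mpr ⟨hA, rfl, mem_compl.mpr fun hj => ?_⟩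
  linarith [hmin _ hj, hpos h hA]

theorem stmt4_general (n : ℕ) (A : Finset (Fin n × Fin n × ℝ))
    (hpos : ∀ h ∈ A, 0 < h.2.2)
    (r : Fin n → ℝ) :
    ∀ I : Finset (Fin n), I.Nonempty →
      ∃ i ∈ I, (A.filter (fun h => h.1 = i ∧ r h.1 - r h.2.1 > h.2.2)).card ≤
        ∑ j ∈ Iᶜ, (A.filter (fun h => h.1 = i ∧ h.2.1 = j)).card := by
  intro I hI
  obtain ⟨i, hiI, hmin⟩ := I.exists_min_image r hI
  refine ⟨i, hiI, ?_⟩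
  rw [sum_card_filter_and_eq A (fun h => h.1 = i) (fun h => h.2.1) Iᶜ]
  exact card_le_card (filter_sub_gt_subset_filter_mem_compl A hpos r I i hmin)

/-- The Pak–Stanley label `λ_r` of a point `r` of the complement of an
arrangement of hyperplanes `x_i - x_j = a` (`a > 0`) is a `G_𝒜`-parking function. -/
theorem stmt4 (n : ℕ) (A : Finset (Fin n × Fin n × ℝ))
    (hpos : ∀ h ∈ A, 0 < h.2.2)
    (r : Fin n → ℝ) (hV : ∑ i, r i = 0)
    (hcompl : ∀ h ∈ A, r h.1 - r h.2.1 ≠ h.2.2) :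
    ∀ I : Finset (Fin n), I.Nonempty →
      ∃ i ∈ I, (A.filter (fun h => h.1 = i ∧ r h.1 - r h.2.1 > h.2.2)).card ≤
        ∑ j ∈ Iᶜ, (A.filter (fun h => h.1 = i ∧ h.2.1 = j)).card :=
  stmt4_general n A hpos r
end

section
/- Let 𝒜 be a finite arrangement of hyperplanes H_{ij}^a = {x_i - x_j = a} with a > 0 in V = {x ∈ ℝ^n : Σ x_i = 0}, and G = G_𝒜 its oriented multigraph. For every G-parking function f there exists a point r ∈ V lying in the complement of all hyperplanes of 𝒜 such that for every i, f(i) = #{H_{ij}^a ∈ 𝒜 : r_i - r_j > a}. That is, the Pak–Stanley labeling of the regions of 𝒜 by G-parking functions is surjective. -/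
/-!
A parking function orders the vertices so that every `v` has at least `f v` edges to earlier
vertices; placing the vertices far apart in this order gives a generic point whose labels
dominate `f`. While some vertex `i` has `λ_r(i) > f(i)`, slide `r_i` down until exactly `f(i)`
of its walls `r_j + a` lie below it, stopping above some other vertex. This keeps the point
generic and bounded below, and it can only raise the labels of the other vertices, and only of
those lying more than `δ = min a` above the new position of `i`. Cutting the line into bands
of width `δ`, the number of vertices above band `c` plus the number of vertices with an excess
inside band `c` therefore decreases lexicographically in `c`, so the process stops, at a point
whose labels are exactly `f`.
-/

open Finset Function

namespace PakStanley

variable {n : ℕ} (A : Finset (Fin n × Fin n × ℝ))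

noncomputable def label (r : Fin n → ℝ) (i : Fin n) : ℕ :=
  #{h ∈ A | h.1 = i ∧ r h.1 - r h.2.1 > h.2.2}

noncomputable def offsets : Finset ℝ := insert 0 (A.image fun h => h.2.2)

/-- The numbers `r j + a`, for `a = 0` or `a` a height of `𝒜`, are pairwise distinct: `r` avoids
every hyperplane, and the walls of each vertex are distinct. -/
def IsGeneric (r : Fin n → ℝ) : Prop :=
  Set.InjOn (fun p : Fin n × ℝ => r p.1 + p.2) (Set.univ ×ˢ ↑(offsets A))

noncomputable def walls (r : Fin n → ℝ) (i : Fin n) : Finset ℝ :=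
  {h ∈ A | h.1 = i ∧ h.2.1 ≠ i}.image fun h => r h.2.1 + h.2.2

variable {A}

lemma mem_offsets_of_mem {h : Fin n × Fin n × ℝ} (hA : h ∈ A) : h.2.2 ∈ offsets A :=
  mem_insert_of_mem (mem_image_of_mem _ hA)

lemma zero_mem_offsets : (0 : ℝ) ∈ offsets A := mem_insert_self _ _

lemma IsGeneric.sub_ne {r : Fin n → ℝ} (hr : IsGeneric A r) (hpos : ∀ h ∈ A, 0 < h.2.2)
    {h : Fin n × Fin n × ℝ} (hA : h ∈ A) : r h.1 - r h.2.1 ≠ h.2.2 := by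
  intro heq
  have := @hr (h.1, 0) ⟨trivial, zero_mem_offsets⟩ (h.2.1, h.2.2)
    ⟨trivial, mem_offsets_of_mem hA⟩ (by simp only; linarith)
  linarith [hpos h hA, (Prod.ext_iff.1 this).2]

lemma IsGeneric.injOn_walls {r : Fin n → ℝ} (hr : IsGeneric A r) (i : Fin n) :
    Set.InjOn (fun h : Fin n × Fin n × ℝ => r h.2.1 + h.2.2)
      ({h ∈ A | h.1 = i ∧ h.2.1 ≠ i} : Finset _) := by
  intro h hh h' hh' heq
  simp only [coe_filter, Set.mem_ofPred_eq] at hh hh'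
  have := @hr (h.2.1, h.2.2) ⟨trivial, mem_offsets_of_mem hh.1⟩ (h'.2.1, h'.2.2)
    ⟨trivial, mem_offsets_of_mem hh'.1⟩ heq
  simp only [Prod.mk.injEq] at this
  exact Prod.ext (hh.2.1.trans hh'.2.1.symm) (Prod.ext this.1 this.2)

lemma label_update_self (hpos : ∀ h ∈ A, 0 < h.2.2) {r : Fin n → ℝ} (hr : IsGeneric A r)
    (i : Fin n) (x : ℝ) : label A (update r i x) i = #{w ∈ walls A r i | w < x} := by
  rw [walls, filter_image,
    card_image_of_injOn ((hr.injOn_walls i).mono (coe_subset.2 (filter_subset _ _))), label,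
    filter_filter]
  congr 1
  refine filter_congr fun h hA => ?_
  by_cases h1 : h.1 = i
  · by_cases h2 : h.2.1 = i
    · simp [h1, h2, (hpos h hA).le]
    · simp only [h1, h2, update_self, update_of_ne h2, ne_eq, not_false_eq_true, true_and]
      constructor <;> intro <;> linarith
  · simp [h1]

lemma label_eq_card_walls (hpos : ∀ h ∈ A, 0 < h.2.2) {r : Fin n → ℝ} (hr : IsGeneric A r)
    (i : Fin n) : label A r i = #{w ∈ walls A r i | w < r i} := by
  rw [← label_update_self hpos hr, update_eq_self]

lemma IsGeneric.update {r : Fin n → ℝ} (hr : IsGeneric A r) (i : Fin n) {x : ℝ}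
    (hx : x ∉ (univ ×ˢ offsets A ×ˢ offsets A).image fun p => r p.1 + p.2.1 - p.2.2) :
    IsGeneric A (update r i x) := by
  have avoid : ∀ j a b, a ∈ offsets A → b ∈ offsets A → x + b ≠ r j + a := fun j a b ha hb h =>
    hx (mem_image.2 ⟨(j, a, b), by simp [ha, hb], by linarith⟩)
  rintro ⟨p, a⟩ ⟨-, ha⟩ ⟨q, b⟩ ⟨-, hb⟩ heq
  simp only at heq ⊢
  by_cases hp : p = i <;> by_cases hq : q = i
  · subst hp hq; simpa using heq
  · rw [hp, update_self, update_of_ne hq] at heq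
    exact absurd heq (avoid q b a hb ha)
  · rw [hq, update_self, update_of_ne hp] at heq
    exact absurd heq.symm (avoid p a b ha hb)
  · rw [update_of_ne hp, update_of_ne hq] at heq
    exact hr ⟨trivial, ha⟩ ⟨trivial, hb⟩ heq

lemma label_le_label_update {r : Fin n → ℝ} {i v : Fin n} (hv : v ≠ i) {x : ℝ} (hx : x ≤ r i) :
    label A r v ≤ label A (update r i x) v := by
  refine card_le_card fun h hh => ?_
  simp only [mem_filter] at hh ⊢
  obtain ⟨hA, rfl, hgt⟩ := hh
  refine ⟨hA, rfl, ?_⟩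
  rw [update_of_ne hv]
  by_cases h2 : h.2.1 = i
  · rw [h2, update_self]; rw [h2] at hgt; linarith
  · rwa [update_of_ne h2]

lemma label_update_of_ne {δ : ℝ} (hδ : ∀ h ∈ A, δ ≤ h.2.2) {r : Fin n → ℝ} {i v : Fin n}
    (hv : v ≠ i) {x : ℝ} (hx : x ≤ r i) (hvx : r v ≤ x + δ) :
    label A (update r i x) v = label A r v := by
  unfold label
  congr 1
  refine filter_congr fun h hA => and_congr_right fun h1 => ?_
  rw [h1, update_of_ne hv]
  by_cases h2 : h.2.1 = i
  · rw [h2, update_self]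
    have := hδ h hA
    constructor <;> intro <;> linarith
  · rw [update_of_ne h2]

lemma _root_.Finset.exists_mem_card_filter_lt_eq {α : Type*} [LinearOrder α] (s : Finset α)
    {m : ℕ} (hm : m < #s) : ∃ u ∈ s, #{v ∈ s | v < u} = m := by
  induction s using Finset.induction_on_max generalizing m with
  | empty => simp at hm
  | insert a s hlt ih =>
    have has : a ∉ s := fun h => lt_irrefl a (hlt a h)
    rw [card_insert_of_notMem has] at hm
    rcases Nat.lt_succ_iff_lt_or_eq.1 hm with hm | rfl
    · obtain ⟨u, hu, hcard⟩ := ih hm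
      refine ⟨u, mem_insert_of_mem hu, ?_⟩
      rwa [filter_insert, if_neg (not_lt.2 (hlt u hu).le)]
    · refine ⟨a, mem_insert_self a s, ?_⟩
      rw [filter_insert, if_neg (lt_irrefl a), filter_true_of_mem hlt]

lemma _root_.Finset.exists_between_avoiding {α : Type*} [LinearOrder α] [DenselyOrdered α]
    [NoMinOrder α] {F : Finset α} {u : α} (hF : ∀ y ∈ F, y < u) (T : Finset α) :
    ∃ x < u, (∀ y ∈ F, y < x) ∧ x ∉ T := by
  obtain ⟨lo, hlo, hloF⟩ : ∃ lo < u, ∀ y ∈ F, y ≤ lo := by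
    rcases F.eq_empty_or_nonempty with rfl | hne
    · obtain ⟨lo, hlo⟩ := exists_lt u
      exact ⟨lo, hlo, by simp⟩
    · exact ⟨F.max' hne, (max'_lt_iff F hne).2 hF, fun y hy => le_max' F y hy⟩
  obtain ⟨x, ⟨hlox, hxu⟩, hxT⟩ := (Set.Ioo_infinite hlo).exists_notMem_finset T
  exact ⟨x, hxu, fun y hy => (hloF y hy).trans_lt hlox, hxT⟩

lemma exists_update_label_eq (hpos : ∀ h ∈ A, 0 < h.2.2) {r : Fin n → ℝ} (hr : IsGeneric A r)
    {i : Fin n} {m : ℕ} (hm : m < label A r i) :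
    ∃ x < r i, IsGeneric A (update r i x) ∧ label A (update r i x) i = m ∧
      ∃ j ≠ i, r j < x := by
  rw [label_eq_card_walls hpos hr] at hm
  obtain ⟨u, hu, hcard⟩ := exists_mem_card_filter_lt_eq _ hm
  rw [mem_filter] at hu
  obtain ⟨h₀, hh₀, hu_eq⟩ := mem_image.1 hu.1
  simp only [mem_filter] at hh₀
  obtain ⟨x, hxu, hxF, hxT⟩ := exists_between_avoiding
    (F := insert (r h₀.2.1) {w ∈ walls A r i | w < u}) (u := u)
    (by simpa [← hu_eq] using hpos h₀ hh₀.1) _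
  have hlow : ∀ w ∈ walls A r i, w < x ↔ w < u := fun w hw =>
    ⟨fun h => h.trans hxu, fun h => hxF w (mem_insert_of_mem (mem_filter.2 ⟨hw, h⟩))⟩
  refine ⟨x, hxu.trans hu.2, hr.update i hxT, ?_, h₀.2.1, hh₀.2.2, hxF _ (mem_insert_self _ _)⟩
  rw [label_update_self hpos hr, ← hcard, filter_filter]
  exact congrArg card (filter_congr fun w hw => by
    rw [hlow w hw]; exact ⟨fun h => ⟨h.trans hu.2, h⟩, And.right⟩)

lemma sum_card_edges_compl (i : Fin n) (I : Finset (Fin n)) :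
    ∑ j ∈ Iᶜ, #{h ∈ A | h.1 = i ∧ h.2.1 = j} = #{h ∈ A | h.1 = i ∧ h.2.1 ∉ I} := by
  rw [card_eq_sum_card_fiberwise (f := fun h => h.2.1) (t := Iᶜ)
    (fun h hh => by simpa using (mem_filter.1 hh).2.2)]
  refine sum_congr rfl fun j hj => congrArg card ?_
  rw [filter_filter]
  refine filter_congr fun h _ => ?_
  constructor
  · rintro ⟨h1, rfl⟩; exact ⟨⟨h1, mem_compl.1 hj⟩, rfl⟩
  · rintro ⟨⟨h1, -⟩, h2⟩; exact ⟨h1, h2⟩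

lemma exists_order_of_parking {f : Fin n → ℕ}
    (hpark : ∀ I : Finset (Fin n), I.Nonempty →
      ∃ i ∈ I, f i ≤ ∑ j ∈ Iᶜ, #{h ∈ A | h.1 = i ∧ h.2.1 = j}) (I : Finset (Fin n)) :
    ∃ ρ : Fin n → ℕ, Set.InjOn ρ I ∧
      ∀ v ∈ I, f v ≤ #{h ∈ A | h.1 = v ∧ (h.2.1 ∉ I ∨ ρ h.2.1 < ρ v)} := by
  induction I using Finset.strongInduction with | _ I ih
  rcases I.eq_empty_or_nonempty with rfl | hne
  · exact ⟨0, by simp, by simp⟩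
  obtain ⟨i, hiI, hfi⟩ := hpark I hne
  rw [sum_card_edges_compl] at hfi
  obtain ⟨ρ, hρ, hfρ⟩ := ih _ (erase_ssubset hiI)
  refine ⟨fun u => if u = i then 0 else ρ u + 1, ?_, fun v hv => ?_⟩
  · intro u hu w hw huw
    by_cases hui : u = i <;> by_cases hwi : w = i <;> simp only [hui, hwi, if_true, if_false] at huw
    · exact hui.trans hwi.symm
    · omega
    · omega
    · exact hρ (mem_erase.2 ⟨hui, hu⟩) (mem_erase.2 ⟨hwi, hw⟩) (by omega)
  by_cases hvi : v = i
  · subst hvi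
    refine hfi.trans (card_le_card fun h hh => ?_)
    simp only [mem_filter] at hh ⊢
    exact ⟨hh.1, hh.2.1, Or.inl hh.2.2⟩
  · refine (hfρ v (mem_erase.2 ⟨hvi, hv⟩)).trans (card_le_card fun h hh => ?_)
    simp only [mem_filter, mem_erase, not_and, hvi, if_false] at hh ⊢
    refine ⟨hh.1, hh.2.1, ?_⟩
    by_cases hwi : h.2.1 = i
    · simp [hwi]
    · simp only [hwi, if_false] at hh ⊢
      exact hh.2.2.imp (· hwi) (by omega)

lemma exists_isGeneric_le_label {f : Fin n → ℕ}
    (hpark : ∀ I : Finset (Fin n), I.Nonempty →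
      ∃ i ∈ I, f i ≤ ∑ j ∈ Iᶜ, #{h ∈ A | h.1 = i ∧ h.2.1 = j}) :
    ∃ r, IsGeneric A r ∧ ∀ v, f v ≤ label A r v := by
  obtain ⟨ρ, hρ, hfρ⟩ := exists_order_of_parking hpark univ
  obtain ⟨M, hM⟩ := ((offsets A ×ˢ offsets A).image fun p => |p.1 - p.2|).exists_le
  have hM' : ∀ a ∈ offsets A, ∀ b ∈ offsets A, |a - b| < M + 1 := fun a ha b hb =>
    (hM _ (mem_image_of_mem _ (mem_product.2 ⟨ha, hb⟩ : (a, b) ∈ _))).trans_lt (lt_add_one M)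
  have hM0 : 0 < M + 1 := by simpa using hM' 0 zero_mem_offsets 0 zero_mem_offsets
  refine ⟨fun v => (M + 1) * ρ v, ?_, fun v => (hfρ v (mem_univ v)).trans (card_le_card ?_)⟩
  · rintro ⟨p, a⟩ ⟨-, ha⟩ ⟨q, b⟩ ⟨-, hb⟩ heq
    simp only at heq
    by_contra hne
    have hpq : p ≠ q := fun h => hne (by subst h; simp only [add_right_inj] at heq; rw [heq])
    have := hM' a ha b hb
    rw [abs_lt] at this
    rcases Nat.lt_or_gt_of_ne (hρ.ne (mem_coe.2 (mem_univ p)) (mem_coe.2 (mem_univ q)) hpq)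
      with h | h
    · have h' : (ρ p : ℝ) + 1 ≤ ρ q := by exact_mod_cast h
      nlinarith
    · have h' : (ρ q : ℝ) + 1 ≤ ρ p := by exact_mod_cast h
      nlinarith
  · intro h hh
    simp only [mem_filter, mem_univ, not_true_eq_false, false_or] at hh ⊢
    obtain ⟨hA, rfl, hlt⟩ := hh
    refine ⟨hA, rfl, ?_⟩
    have h' : ((ρ h.2.1 : ℕ) : ℝ) + 1 ≤ ρ h.1 := by exact_mod_cast hlt
    have := (le_abs_self _).trans_lt (hM' _ (mem_offsets_of_mem hA) 0 zero_mem_offsets)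
    nlinarith

section Descent

variable (A) (f : Fin n → ℕ) (δ L : ℝ) (B : ℕ)

noncomputable def band (y : ℝ) : ℕ := ⌊(y - L) / δ⌋₊

noncomputable def excessProfile (r : Fin n → ℝ) (c : Fin (B + 1)) : ℕ :=
  #{v | c < band δ L (r v) ∨ (c = band δ L (r v) ∧ f v < label A r v)}

variable {A f δ L B}

lemma band_mono (hδ : 0 < δ) {x y : ℝ} (hxy : x ≤ y) : band δ L x ≤ band δ L y :=
  Nat.floor_mono (by gcongr)

lemma lt_add_of_band_le (hδ : 0 < δ) {x y : ℝ} (hx : L ≤ x) (h : band δ L y ≤ band δ L x) :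
    y < x + δ := by
  have h1 := Nat.lt_floor_add_one ((y - L) / δ)
  have h2 := Nat.floor_le (div_nonneg (sub_nonneg.2 hx) hδ.le)
  have h3 : (⌊(y - L) / δ⌋₊ : ℝ) ≤ ⌊(x - L) / δ⌋₊ := by exact_mod_cast h
  have : (y - L) / δ < (x - L) / δ + 1 := by unfold band at h; linarith
  rw [div_lt_iff₀ hδ, add_mul, div_mul_cancel₀ _ hδ.ne'] at this
  linarith

lemma excessProfile_update_lt (hδ : 0 < δ) (hδA : ∀ h ∈ A, δ ≤ h.2.2) {r : Fin n → ℝ}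
    {i : Fin n} {x : ℝ} (hLx : L ≤ x) (hxi : x ≤ r i) (hxB : band δ L x ≤ B)
    (hexcess : f i < label A r i) (hlabel : label A (update r i x) i = f i) :
    toLex (excessProfile A f δ L B (update r i x)) < toLex (excessProfile A f δ L B r) := by
  have same : ∀ c ≤ band δ L x, ∀ v ≠ i,
      (c < band δ L (update r i x v) ∨
          (c = band δ L (update r i x v) ∧ f v < label A (update r i x) v)) ↔
        (c < band δ L (r v) ∨ (c = band δ L (r v) ∧ f v < label A r v)) := by
    intro c hc v hv
    rw [update_of_ne hv]
    refine or_congr_right (and_congr_right fun hcv => ?_)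
    rw [label_update_of_ne hδA hv hxi (lt_add_of_band_le hδ hLx (hcv ▸ hc)).le]
  refine ⟨⟨band δ L x, Nat.lt_succ_of_le hxB⟩, fun c hc => ?_, ?_⟩
  · replace hc : (c : ℕ) < band δ L x := hc
    simp only [Pi.toLex_apply, excessProfile]
    refine congrArg card (filter_congr fun v _ => ?_)
    by_cases hv : v = i
    · subst hv
      simp only [update_self]
      exact iff_of_true (Or.inl hc) (Or.inl (hc.trans_le (band_mono hδ hxi)))
    · exact same c hc.le v hv
  · simp only [Pi.toLex_apply, excessProfile]
    refine card_lt_card ((ssubset_iff_of_subset fun v hv => ?_).2 ⟨i, ?_, ?_⟩)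
    · rw [mem_filter] at hv ⊢
      by_cases hvi : v = i
      · subst hvi
        simp [hlabel] at hv
      · exact ⟨mem_univ v, (same _ le_rfl v hvi).1 hv.2⟩
    · simp only [mem_filter, mem_univ, true_and]
      rcases (band_mono hδ hxi).lt_or_eq with h | h
      · exact Or.inl h
      · exact Or.inr ⟨h, hexcess⟩
    · simp [hlabel]

theorem exists_label_eq_of_le_label (hpos : ∀ h ∈ A, 0 < h.2.2) {r₀ : Fin n → ℝ}
    (hr₀ : IsGeneric A r₀) (hf : ∀ v, f v ≤ label A r₀ v) :
    ∃ r, IsGeneric A r ∧ ∀ v, label A r v = f v := by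
  obtain ⟨δ, hδ, hδA⟩ : ∃ δ > 0, ∀ h ∈ A, δ ≤ h.2.2 := by
    set s := insert 1 (A.image fun h => h.2.2)
    refine ⟨s.min' (insert_nonempty _ _), (lt_min'_iff _ _).2 fun y hy => ?_,
      fun h hA => min'_le _ _ (mem_insert_of_mem (mem_image_of_mem _ hA))⟩
    obtain rfl | ⟨h, hA, rfl⟩ := mem_insert.1 hy |>.imp_right mem_image.1
    exacts [one_pos, hpos h hA]
  obtain ⟨L, hL⟩ := (Set.finite_range r₀).bddBelow
  obtain ⟨U, hU⟩ := (Set.finite_range r₀).bddAbove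
  suffices ∀ r, IsGeneric A r → (∀ v, f v ≤ label A r v) → (∀ v, L ≤ r v ∧ r v ≤ U) →
      ∃ r', IsGeneric A r' ∧ ∀ v, label A r' v = f v from
    this r₀ hr₀ hf fun v => ⟨hL ⟨v, rfl⟩, hU ⟨v, rfl⟩⟩
  intro r
  induction r using (InvImage.wf (fun r => toLex (excessProfile A f δ L (band δ L U) r))
    wellFounded_lt).induction with | _ r ih
  intro hr hf hLU
  by_cases hexcess : ∃ i, f i < label A r i
  swap
  · simp only [not_exists, not_lt] at hexcess
    exact ⟨r, hr, fun v => le_antisymm (hexcess v) (hf v)⟩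
  obtain ⟨i, hi⟩ := hexcess
  obtain ⟨x, hxi, hgen, hlabel, j, -, hjx⟩ := exists_update_label_eq hpos hr hi
  have hLx : L ≤ x := (hLU j).1.trans hjx.le
  refine ih _ (excessProfile_update_lt hδ hδA hLx hxi.le
    (band_mono hδ (hxi.le.trans (hLU i).2)) hi hlabel) hgen (fun v => ?_) (fun v => ?_)
  · by_cases hv : v = i
    · subst hv; exact hlabel.ge
    · exact (hf v).trans (label_le_label_update hv hxi.le)
  · by_cases hv : v = i
    · subst hv; simpa using ⟨hLx, hxi.le.trans (hLU v).2⟩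
    · rw [update_of_ne hv]; exact hLU v

end Descent

end PakStanley

/-- Surjectivity of the Pak–Stanley labeling: every `G_𝒜`-parking
function arises as the label `λ_r` of some point `r` of the complement of `𝒜`. -/
theorem stmt5 (n : ℕ) (A : Finset (Fin n × Fin n × ℝ))
    (hpos : ∀ h ∈ A, 0 < h.2.2)
    (f : Fin n → ℕ)
    (hpark : ∀ I : Finset (Fin n), I.Nonempty →
      ∃ i ∈ I, f i ≤ ∑ j ∈ Iᶜ, (A.filter (fun h => h.1 = i ∧ h.2.1 = j)).card) :
    ∃ r : Fin n → ℝ, (∑ i, r i = 0) ∧ (∀ h ∈ A, r h.1 - r h.2.1 ≠ h.2.2) ∧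
      ∀ i, f i = (A.filter (fun h => h.1 = i ∧ r h.1 - r h.2.1 > h.2.2)).card := by
  obtain ⟨r₀, hr₀, hf⟩ := PakStanley.exists_isGeneric_le_label hpark
  obtain ⟨r, hr, hlabel⟩ := PakStanley.exists_label_eq_of_le_label hpos hr₀ hf
  refine ⟨fun i => r i - (∑ j, r j) / n, ?_, fun h hA => ?_, fun i => ?_⟩
  · rcases Nat.eq_zero_or_pos n with rfl | hn
    · simp
    · simp [sum_sub_distrib, mul_div_cancel₀ _ (Nat.cast_ne_zero.2 hn.ne' : (n : ℝ) ≠ 0)]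
  · simpa only [sub_sub_sub_cancel_right] using hr.sub_ne hpos hA
  · simpa only [PakStanley.label, sub_sub_sub_cancel_right] using (hlabel i).symm
end

section
/- The number of k-parking functions on {1,...,n} equals (kn+1)^{n-1}. -/
open Finset

namespace Stmt8

/-- counting form of the parking condition, for `ZMod m` valued functions -/
def PC (n k m : ℕ) (f : Fin n → ZMod m) : Prop :=
  ∀ t < n, t < (univ.filter (fun i => (f i).val ≤ k * t)).card

/-- Lemma A : the subset form is equivalent to the counting form -/
lemma parking_iff (n k : ℕ) (f : Fin n → ℕ) :
    (∀ I : Finset (Fin n), I.Nonempty → ∃ i ∈ I, f i ≤ k * (n - I.card)) ↔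
    ∀ t < n, t < (univ.filter (fun i => f i ≤ k * t)).card := by
  constructor
  · intro H t ht
    by_contra hcon
    push_neg at hcon
    have hIcard : n - t ≤ (univ.filter (fun i => ¬ (f i ≤ k * t))).card := by
      have h := Finset.card_filter_add_card_filter_not
        (s := (univ : Finset (Fin n))) (p := fun i => f i ≤ k * t)
      simp only [Finset.card_univ, Fintype.card_fin] at h
      omega
    obtain ⟨J, hJsub, hJcard⟩ := Finset.exists_subset_card_eq hIcard
    have hJne : J.Nonempty := by
      rw [← Finset.card_pos, hJcard]; omega
    obtain ⟨i, hiJ, hif⟩ := H J hJne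
    rw [hJcard] at hif
    have : i ∈ univ.filter (fun i => ¬ (f i ≤ k * t)) := hJsub hiJ
    simp only [Finset.mem_filter] at this
    have ht' : n - (n - t) = t := by omega
    rw [ht'] at hif
    exact this.2 hif
  · intro H I hI
    have h1 : 1 ≤ I.card := Finset.card_pos.2 hI
    have h2 : I.card ≤ n := by
      simpa using Finset.card_le_card (Finset.subset_univ I)
    set t := n - I.card with htdef
    have ht : t < n := by omega
    have hcard := H t ht
    set S := univ.filter (fun i => f i ≤ k * t) with hS
    have hinter : (I ∩ S).Nonempty := by
      rw [← Finset.card_pos]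
      have hu : (I ∪ S).card ≤ n := by
        simpa using Finset.card_le_card (Finset.subset_univ (I ∪ S))
      have := Finset.card_union_add_card_inter I S
      omega
    obtain ⟨i, hi⟩ := hinter
    rw [Finset.mem_inter, hS, Finset.mem_filter] at hi
    exact ⟨i, hi.1, hi.2.2⟩


variable (n k : ℕ)

/-- number of indices hitting residue `j % m` -/
def dd (n m : ℕ) (g : Fin n → ZMod m) (j : ℕ) : ℕ :=
  (univ.filter (fun i => (g i).val = j % m)).card

/-- the height function of the lattice path -/
def FF (n k m : ℕ) (g : Fin n → ZMod m) (u : ℕ) : ℤ :=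
  (∑ j ∈ Finset.range u, (k * dd n m g j : ℤ)) - u

lemma dd_period (n m : ℕ) (g : Fin n → ZMod m) (j : ℕ) :
    dd n m g (j + m) = dd n m g j := by
  unfold dd
  rw [Nat.add_mod_right]

lemma sum_dd (n m : ℕ) (hm : 0 < m) (g : Fin n → ZMod m) :
    ∑ j ∈ Finset.range m, dd n m g j = n := by
  haveI : NeZero m := ⟨hm.ne'⟩
  have h := Finset.card_eq_sum_card_fiberwise
    (f := fun i : Fin n => (g i).val) (s := univ) (t := Finset.range m)
    (fun i _ => Finset.mem_range.2 ((g i).val_lt))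
  simp only [Finset.card_univ, Fintype.card_fin, Finset.filter_univ_mem] at h
  calc ∑ j ∈ Finset.range m, dd n m g j
      = ∑ j ∈ Finset.range m, (univ.filter (fun a => (g a).val = j)).card := by
        apply Finset.sum_congr rfl
        intro j hj
        unfold dd
        rw [Nat.mod_eq_of_lt (Finset.mem_range.1 hj)]
    _ = n := h.symm

lemma FF_succ (n k m : ℕ) (g : Fin n → ZMod m) (u : ℕ) :
    FF n k m g (u + 1) = FF n k m g u + k * dd n m g u - 1 := by
  unfold FF
  rw [Finset.sum_range_succ]
  push_cast
  ring

lemma FF_add_m (n k : ℕ) (g : Fin n → ZMod (k * n + 1)) (u : ℕ) :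
    FF n k (k * n + 1) g (u + (k * n + 1)) = FF n k (k * n + 1) g u - 1 := by
  induction u with
  | zero =>
    simp only [Nat.zero_add]
    unfold FF
    have hs : ∑ j ∈ Finset.range (k * n + 1), (k * dd n (k * n + 1) g j : ℤ)
        = (k : ℤ) * ∑ j ∈ Finset.range (k * n + 1), (dd n (k * n + 1) g j : ℤ) := by
      rw [Finset.mul_sum]
    have hd : ∑ j ∈ Finset.range (k * n + 1), (dd n (k * n + 1) g j : ℤ) = (n : ℤ) := by
      rw [← Nat.cast_sum, sum_dd n (k * n + 1) (by omega) g]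
    rw [hs, hd]
    simp only [Finset.range_zero, Finset.sum_empty]
    push_cast
    ring
  | succ u ih =>
    have h1 : u + 1 + (k * n + 1) = (u + (k * n + 1)) + 1 := by omega
    rw [h1, FF_succ, ih, FF_succ, dd_period]
    ring


/-- fiber:  #{i : (g i - c).val = v} = dd (c+v)  for v < m -/
lemma fiber_card (n m : ℕ) (hm : 0 < m) (g : Fin n → ZMod m) (c v : ℕ) (hv : v < m) :
    (univ.filter (fun i => ((g i - (c : ZMod m)).val = v))).card = dd n m g (c + v) := by
  haveI : NeZero m := ⟨hm.ne'⟩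
  unfold dd
  congr 1
  apply Finset.filter_congr
  intro i _
  constructor
  · intro h
    have h2 : g i - (c : ZMod m) = (v : ZMod m) := by
      have h4 := ZMod.natCast_val (R := ZMod m) (g i - (c : ZMod m))
      rw [h, ZMod.cast_id] at h4
      exact h4.symm
    have h3 : g i = ((c + v : ℕ) : ZMod m) := by
      push_cast
      rw [← h2]; ring
    rw [h3, ZMod.val_natCast]
  · intro h
    have h3 : g i = ((c + v : ℕ) : ZMod m) := by
      have h4 := ZMod.natCast_val (R := ZMod m) (g i)
      rw [h, ZMod.cast_id] at h4
      rw [← h4, ZMod.natCast_mod]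
    have h2 : g i - (c : ZMod m) = (v : ZMod m) := by
      rw [h3]; push_cast; ring
    rw [h2, ZMod.val_cast_of_lt hv]

/-- counting function as partial sums of `dd` -/
lemma card_filter_le (n m : ℕ) (hm : 0 < m) (g : Fin n → ZMod m) (c w : ℕ) (hw : w ≤ m) :
    (univ.filter (fun i => ((g i - (c : ZMod m)).val < w))).card
      = ∑ s ∈ Finset.range w, dd n m g (c + s) := by
  haveI : NeZero m := ⟨hm.ne'⟩
  have h := Finset.card_eq_sum_card_fiberwise
    (f := fun i : Fin n => (g i - (c : ZMod m)).val)
    (s := univ.filter (fun i => ((g i - (c : ZMod m)).val < w)))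
    (t := Finset.range w)
    (fun i hi => Finset.mem_range.2 (Finset.mem_filter.1 hi).2)
  rw [h]
  apply Finset.sum_congr rfl
  intro v hv
  have hv' : v < w := Finset.mem_range.1 hv
  rw [Finset.filter_filter]
  rw [← fiber_card n m hm g c v (lt_of_lt_of_le hv' hw)]
  congr 1
  apply Finset.filter_congr
  intro i _
  constructor
  · rintro ⟨_, h2⟩; exact h2
  · intro h2; exact ⟨h2 ▸ hv', h2⟩

/-- increments of FF are partial sums of dd -/
lemma FF_diff (n k m : ℕ) (g : Fin n → ZMod m) (c u : ℕ) :
    FF n k m g (c + u) - FF n k m g c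
      = (k : ℤ) * (∑ s ∈ Finset.range u, (dd n m g (c + s) : ℤ)) - u := by
  unfold FF
  rw [Finset.sum_range_add]
  push_cast
  rw [Finset.mul_sum]
  ring


/-- The link: parking condition for the shift `c` ↔ height function condition -/
lemma link (n k : ℕ) (hk : 0 < k) (g : Fin n → ZMod (k * n + 1)) (c : ℕ) :
    PC n k (k * n + 1) (fun i => g i - (c : ZMod (k * n + 1))) ↔
    ∀ u, 1 ≤ u → u ≤ k * n →
      FF n k (k * n + 1) g c ≤ FF n k (k * n + 1) g (c + u) := by
  have hm : 0 < k * n + 1 := by omega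
  set D : ℕ → ℕ := fun u => ∑ s ∈ Finset.range u, dd n (k * n + 1) g (c + s) with hD
  have hmono : ∀ u v : ℕ, u ≤ v → D u ≤ D v := fun u v huv =>
    Finset.sum_le_sum_of_subset (Finset.range_subset_range.2 huv)
  have hFF : ∀ u : ℕ,
      (FF n k (k * n + 1) g c ≤ FF n k (k * n + 1) g (c + u) ↔ u ≤ k * D u) := by
    intro u
    have h1 := FF_diff n k (k * n + 1) g c u
    have h2 : (∑ s ∈ Finset.range u, (dd n (k * n + 1) g (c + s) : ℤ)) = ((D u : ℕ) : ℤ) := by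
      rw [hD]; push_cast; rfl
    rw [h2] at h1
    rw [← sub_nonneg, h1, sub_nonneg]
    exact_mod_cast Iff.rfl
  have hcard : ∀ t, t < n →
      (univ.filter (fun i => ((g i - (c : ZMod (k * n + 1))).val ≤ k * t))).card
        = D (k * t + 1) := by
    intro t ht
    have hw : k * t + 1 ≤ k * n + 1 := by
      have : k * t ≤ k * n := Nat.mul_le_mul_left k (le_of_lt ht)
      omega
    show _ = ∑ s ∈ Finset.range (k * t + 1), dd n (k * n + 1) g (c + s)
    rw [← card_filter_le n (k * n + 1) hm g c (k * t + 1) hw]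
    congr 1
    apply Finset.filter_congr
    intro i _
    simp [Nat.lt_succ_iff]
  have hPCiff : PC n k (k * n + 1) (fun i => g i - (c : ZMod (k * n + 1))) ↔
      ∀ t, t < n → t < D (k * t + 1) := by
    unfold PC
    constructor
    · intro hP t ht
      have := hP t ht
      rwa [hcard t ht] at this
    · intro hP t ht
      have := hP t ht
      rw [hcard t ht]
      exact this
  rw [hPCiff]
  constructor
  · intro hP u h1 hu
    rw [hFF u]
    set t := (u - 1) / k with htdef
    have hkt : k * t ≤ u - 1 := by
      rw [htdef, mul_comm]; exact Nat.div_mul_le_self _ _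
    have htn : t < n := by
      have h3 : k * t < k * n := by omega
      exact lt_of_mul_lt_mul_left h3 (Nat.zero_le k)
    have h5 : t + 1 ≤ D u := lt_of_lt_of_le (hP t htn) (hmono _ _ (by omega))
    have h6 : k * (t + 1) ≤ k * D u := Nat.mul_le_mul_left k h5
    have h6' : k * (t + 1) = k * t + k := by ring
    have h7 := Nat.div_add_mod (u - 1) k
    have h8 : (u - 1) % k < k := Nat.mod_lt _ hk
    rw [← htdef] at h7
    omega
  · intro hG t ht
    have hu1 : 1 ≤ k * t + 1 := by omega
    have hu2 : k * t + 1 ≤ k * n := by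
      have h3 : k * (t + 1) ≤ k * n := Nat.mul_le_mul_left k (by omega)
      have he : k * (t + 1) = k * t + k := by ring
      omega
    have h9 := (hFF (k * t + 1)).1 (hG _ hu1 hu2)
    by_contra hcon
    push_neg at hcon
    have h10 : k * D (k * t + 1) ≤ k * t := Nat.mul_le_mul_left k hcon
    omega


/-- goodness of a starting point -/
def Good (n k : ℕ) (g : Fin n → ZMod (k * n + 1)) (c : ℕ) : Prop :=
  ∀ u, 1 ≤ u → u ≤ k * n →
    FF n k (k * n + 1) g c ≤ FF n k (k * n + 1) g (c + u)

lemma exists_good (n k : ℕ) (g : Fin n → ZMod (k * n + 1)) :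
    ∃ c < k * n + 1, Good n k g c := by
  classical
  have hm : 0 < k * n + 1 := by omega
  -- a minimizer of FF over range m
  obtain ⟨c₁, hc₁mem, hc₁min⟩ := Finset.exists_min_image (Finset.range (k * n + 1))
    (FF n k (k * n + 1) g) ⟨0, Finset.mem_range.2 hm⟩
  have hex : ∃ c, ∀ c' < (k * n + 1), FF n k (k * n + 1) g c ≤ FF n k (k * n + 1) g c' :=
    ⟨c₁, fun c' hc' => hc₁min c' (Finset.mem_range.2 hc')⟩
  set c := Nat.find hex with hcdef
  have hcspec : ∀ c' < (k * n + 1), FF n k (k * n + 1) g c ≤ FF n k (k * n + 1) g c' := Nat.find_spec hex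
  have hclt : c < (k * n + 1) := lt_of_le_of_lt
    (Nat.find_min' hex (fun c' hc' => hc₁min c' (Finset.mem_range.2 hc')))
    (Finset.mem_range.1 hc₁mem)
  have hstrict : ∀ j, j < c → FF n k (k * n + 1) g c + 1 ≤ FF n k (k * n + 1) g j := by
    intro j hj
    have h1 := Nat.find_min hex hj
    push_neg at h1
    obtain ⟨c', hc', hlt⟩ := h1
    have h2 := hcspec c' hc'
    omega
  refine ⟨c, hclt, ?_⟩
  intro u h1 hu
  by_cases hcase : c + u < (k * n + 1)
  · exact hcspec (c + u) hcase
  · push_neg at hcase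
    set v := c + u - (k * n + 1) with hvdef
    have hveq : c + u = v + (k * n + 1) := by omega
    have hvc : v < c := by omega
    have h3 := hstrict v hvc
    have h4 : FF n k (k * n + 1) g (v + (k * n + 1)) = FF n k (k * n + 1) g v - 1 := FF_add_m n k g v
    rw [hveq, h4]
    omega

lemma unique_good (n k : ℕ) (g : Fin n → ZMod (k * n + 1)) (c c' : ℕ)
    (hc : c < k * n + 1) (hc' : c' < k * n + 1)
    (hgc : Good n k g c) (hgc' : Good n k g c') : c = c' := by
  by_contra hne
  -- wlog via helper: not both good with c < c'
  have key : ∀ a b : ℕ, a < b → b < (k * n + 1) → Good n k g a → Good n k g b → False := by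
    intro a b hab hbm hga hgb
    have h1 : FF n k (k * n + 1) g a ≤ FF n k (k * n + 1) g b := by
      have := hga (b - a) (by omega) (by omega)
      rwa [show a + (b - a) = b by omega] at this
    have h2 : FF n k (k * n + 1) g b ≤ FF n k (k * n + 1) g (a + (k * n + 1)) := by
      have := hgb (a + (k * n + 1) - b) (by omega) (by omega)
      rwa [show b + (a + (k * n + 1) - b) = a + (k * n + 1) by omega] at this
    have h3 : FF n k (k * n + 1) g (a + (k * n + 1)) = FF n k (k * n + 1) g a - 1 := FF_add_m n k g a
    omega
  rcases Nat.lt_or_ge c c' with h | h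
  · exact key c c' h hc' hgc hgc'
  · exact key c' c (by omega) hc hgc' hgc

/-- Key lemma: for every `g` there is exactly one shift making it a parking function -/
lemma key (n k : ℕ) (hk : 0 < k) (g : Fin n → ZMod (k * n + 1)) :
    ∃! c : ZMod (k * n + 1), PC n k (k * n + 1) (fun i => g i - c) := by
  haveI : NeZero (k * n + 1) := ⟨Nat.succ_ne_zero _⟩
  obtain ⟨c₀, hc₀, hgood⟩ := exists_good n k g
  refine ⟨(c₀ : ZMod (k * n + 1)), ?_, ?_⟩
  · exact (link n k hk g c₀).2 hgood
  · intro c hc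
    have hval : ((c.val : ℕ) : ZMod (k * n + 1)) = c := by
      rw [ZMod.natCast_val, ZMod.cast_id]
    have hc2 : PC n k (k * n + 1) (fun i => g i - ((c.val : ℕ) : ZMod (k * n + 1))) := by
      rwa [hval]
    have hgood2 : Good n k g c.val := (link n k hk g c.val).1 hc2
    have := unique_good n k g c.val c₀ (ZMod.val_lt c) hc₀ hgood2 hgood
    rw [← hval, this]


lemma bound (n k : ℕ) (hn : 0 < n) (f : Fin n → ℕ)
    (hf : ∀ t < n, t < (univ.filter (fun i => f i ≤ k * t)).card) (i : Fin n) :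
    f i < k * n + 1 := by
  have h1 := hf (n - 1) (by omega)
  have h2 : (univ.filter (fun i => f i ≤ k * (n - 1))).card ≤ n := by
    simpa using Finset.card_le_card
      (Finset.subset_univ (univ.filter (fun i => f i ≤ k * (n - 1))))
  have h3 : (univ.filter (fun i => f i ≤ k * (n - 1))).card = n := by omega
  have h4 : univ.filter (fun i => f i ≤ k * (n - 1)) = univ := by
    apply Finset.eq_univ_of_card
    simpa using h3
  have h5 : f i ≤ k * (n - 1) := by
    have := Finset.mem_univ i
    rw [← h4, Finset.mem_filter] at this
    exact this.2
  have h6 : k * (n - 1) ≤ k * n := Nat.mul_le_mul_left k (by omega)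
  omega

theorem main (n k : ℕ) (hn : 0 < n) (hk : 0 < k) :
    Nat.card {f : Fin n → ℕ //
      ∀ I : Finset (Fin n), I.Nonempty → ∃ i ∈ I, f i ≤ k * (n - I.card)} =
      (k * n + 1) ^ (n - 1) := by
  classical
  haveI : NeZero (k * n + 1) := ⟨Nat.succ_ne_zero _⟩
  -- step 1: transfer to ZMod-valued functions with the counting condition
  have e1 : {f : Fin n → ℕ //
      ∀ I : Finset (Fin n), I.Nonempty → ∃ i ∈ I, f i ≤ k * (n - I.card)} ≃
      {f : Fin n → ZMod (k * n + 1) // PC n k (k * n + 1) f} := by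
    refine ⟨fun f => ⟨fun i => ((f.1 i : ℕ) : ZMod (k * n + 1)), ?_⟩,
      fun f => ⟨fun i => (f.1 i).val, ?_⟩, ?_, ?_⟩
    · -- forward: PC holds
      have hcount := (parking_iff n k f.1).1 f.2
      intro t ht
      have hb : ∀ i, f.1 i < k * n + 1 := bound n k hn f.1 hcount
      have : (univ.filter (fun i => ((f.1 i : ℕ) : ZMod (k * n + 1)).val ≤ k * t))
          = (univ.filter (fun i => f.1 i ≤ k * t)) := by
        apply Finset.filter_congr
        intro i _
        rw [ZMod.val_cast_of_lt (hb i)]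
      rw [this]
      exact hcount t ht
    · -- backward: subset condition holds
      apply (parking_iff n k _).2
      intro t ht
      exact f.2 t ht
    · -- left inverse
      intro f
      ext i
      simp only
      have hcount := (parking_iff n k f.1).1 f.2
      have hb : ∀ i, f.1 i < k * n + 1 := bound n k hn f.1 hcount
      rw [ZMod.val_cast_of_lt (hb i)]
    · -- right inverse
      intro f
      ext i
      simp only [ZMod.natCast_val, ZMod.cast_id]
  rw [Nat.card_congr e1]
  -- step 2: the shifting bijection
  have e2 : (ZMod (k * n + 1)) × {f : Fin n → ZMod (k * n + 1) // PC n k (k * n + 1) f}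
      ≃ (Fin n → ZMod (k * n + 1)) := by
    apply Equiv.ofBijective (fun p => fun i => p.2.1 i + p.1)
    constructor
    · rintro ⟨c, f, hf⟩ ⟨c', f', hf'⟩ heq
      simp only at heq
      have hc1 : PC n k (k * n + 1) (fun i => (fun i => f i + c) i - c) := by
        simpa using hf
      have hc2 : PC n k (k * n + 1) (fun i => (fun i => f i + c) i - c') := by
        have : (fun i => f i + c) = (fun i => f' i + c') := heq
        rw [this]
        simpa using hf'
      obtain ⟨c₀, hc₀, huniq⟩ := key n k hk (fun i => f i + c)
      have h1 : c = c₀ := huniq c hc1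
      have h2 : c' = c₀ := huniq c' hc2
      have hcc : c = c' := by rw [h1, h2]
      subst hcc
      have hff : f = f' := by
        funext i
        have := congrFun heq i
        exact add_right_cancel this
      subst hff
      rfl
    · intro g
      obtain ⟨c, hc, _⟩ := key n k hk g
      refine ⟨⟨c, ⟨fun i => g i - c, hc⟩⟩, ?_⟩
      funext i
      simp
  have h2 : (k * n + 1) * Nat.card {f : Fin n → ZMod (k * n + 1) // PC n k (k * n + 1) f}
      = (k * n + 1) ^ n := by
    calc (k * n + 1) * Nat.card {f : Fin n → ZMod (k * n + 1) // PC n k (k * n + 1) f}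
        = Nat.card (ZMod (k * n + 1)) *
          Nat.card {f : Fin n → ZMod (k * n + 1) // PC n k (k * n + 1) f} := by
          rw [Nat.card_zmod]
      _ = Nat.card ((ZMod (k * n + 1)) ×
          {f : Fin n → ZMod (k * n + 1) // PC n k (k * n + 1) f}) := (Nat.card_prod _ _).symm
      _ = Nat.card (Fin n → ZMod (k * n + 1)) := Nat.card_congr e2
      _ = (k * n + 1) ^ n := by
          rw [Nat.card_eq_fintype_card, Fintype.card_fun, ZMod.card, Fintype.card_fin]
  have h3 : (k * n + 1) ^ n = (k * n + 1) * (k * n + 1) ^ (n - 1) := by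
    rw [← pow_succ', show (n - 1) + 1 = n by omega]
  rw [h3] at h2
  exact Nat.eq_of_mul_eq_mul_left (by omega) h2

end Stmt8

/-- The number of `k`-parking functions on `{1,...,n}` is `(kn+1)^(n-1)`. -/
theorem stmt8 (n k : ℕ) (hn : 0 < n) (hk : 0 < k) :
    Nat.card {f : Fin n → ℕ //
      ∀ I : Finset (Fin n), I.Nonempty → ∃ i ∈ I, f i ≤ k * (n - I.card)} =
      (k * n + 1) ^ (n - 1) := Stmt8.main n k hn hk
end

section
/- Let 𝒜 be a finite arrangement of hyperplanes H_{ij}^a (a > 0) with multigraph G, r a point of the complement with label λ_r, and f a G-parking function with λ_r(i) ≤ f(i) for all i and I := {i : f(i) > λ_r(i)} non-empty. Suppose no hyperplane H_{pq}^a with p,q ∈ I separates r from the origin. Then not all hyperplanes H_{ij}^a with i ∈ I, j ∉ I lie between r and the origin; i.e., there exists H_{ij}^a ∈ 𝒜 with i ∈ I, j ∉ I and r_i - r_j < a. -/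
/-! The parking condition applied to `I` yields `i ∈ I` with `f i` at most the number of arcs
from `i` leaving `I`. If all those hyperplanes lay between `r` and the origin, each such arc
would be counted by `λ_r i`, giving `f i ≤ λ_r i`, which contradicts `i ∈ I`. -/

open scoped Classical

open Finset

section ArcCounting

variable {α : Type*} [DecidableEq α] (A : Finset (α × α × ℝ)) (r : α → ℝ) (i : α)

theorem sum_card_filter_arcs_eq (s : Finset α) :
    ∑ j ∈ s, (A.filter (fun h => h.1 = i ∧ h.2.1 = j)).card =
      (A.filter (fun h => h.1 = i ∧ h.2.1 ∈ s)).card := by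
  rw [card_eq_sum_card_fiberwise (f := fun h => h.2.1) (t := s) fun h hh => (mem_filter.1 hh).2.2]
  refine sum_congr rfl fun j hj => congrArg card ?_
  ext h
  simp only [mem_filter]
  constructor
  · rintro ⟨hA, rfl, rfl⟩
    exact ⟨⟨hA, rfl, hj⟩, rfl⟩
  · rintro ⟨⟨hA, hi, -⟩, hj⟩
    exact ⟨hA, hi, hj⟩

theorem sum_card_filter_arcs_le_of_forall_lt (s : Finset α)
    (hcross : ∀ h ∈ A, h.1 = i → h.2.1 ∈ s → h.2.2 < r h.1 - r h.2.1) :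
    ∑ j ∈ s, (A.filter (fun h => h.1 = i ∧ h.2.1 = j)).card ≤
      (A.filter (fun h => h.1 = i ∧ r h.1 - r h.2.1 > h.2.2)).card := by
  rw [sum_card_filter_arcs_eq]
  exact card_le_card fun h hh => by
    obtain ⟨hA, hi, hs⟩ := mem_filter.1 hh
    exact mem_filter.2 ⟨hA, hi, hcross h hA hi hs⟩

end ArcCounting

theorem stmt11_general (n : ℕ) (A : Finset (Fin n × Fin n × ℝ))
    (r : Fin n → ℝ)
    (hcompl : ∀ h ∈ A, r h.1 - r h.2.1 ≠ h.2.2)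
    (f : Fin n → ℕ)
    (hpark : ∀ I : Finset (Fin n), I.Nonempty →
      ∃ i ∈ I, f i ≤ ∑ j ∈ Iᶜ, (A.filter (fun h => h.1 = i ∧ h.2.1 = j)).card)
    (I : Finset (Fin n))
    (hIdef : I = Finset.univ.filter fun i =>
      (A.filter (fun h => h.1 = i ∧ r h.1 - r h.2.1 > h.2.2)).card < f i)
    (hIne : I.Nonempty) :
    ∃ h ∈ A, h.1 ∈ I ∧ h.2.1 ∉ I ∧ r h.1 - r h.2.1 < h.2.2 := by
  by_contra! hbetween
  obtain ⟨i, hiI, hfi⟩ := hpark I hIne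
  have hlabel : (A.filter (fun h => h.1 = i ∧ r h.1 - r h.2.1 > h.2.2)).card < f i := by
    simpa [hIdef] using hiI
  -- `r` avoids every hyperplane, so each arc leaving `I` is strictly crossed.
  have hcross : ∀ h ∈ A, h.1 = i → h.2.1 ∈ Iᶜ → h.2.2 < r h.1 - r h.2.1 := by
    rintro h hA rfl hj
    exact (hbetween h hA hiI (mem_compl.1 hj)).lt_of_ne' (hcompl h hA)
  have := hfi.trans (sum_card_filter_arcs_le_of_forall_lt A r i Iᶜ hcross)
  omega

/-- If `f` is a `G_𝒜`-parking function with `λ_r ≤ f`, the set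
`I = {i : f i > λ_r i}` is non-empty, and no hyperplane `H_{pq}^a` with `p,q ∈ I`
separates `r` from the origin, then some hyperplane `H_{ij}^a` with `i ∈ I`,
`j ∉ I` does not lie between `r` and the origin. -/
theorem stmt11 (n : ℕ) (A : Finset (Fin n × Fin n × ℝ))
    (hpos : ∀ h ∈ A, 0 < h.2.2)
    (r : Fin n → ℝ)
    (hcompl : ∀ h ∈ A, r h.1 - r h.2.1 ≠ h.2.2)
    (f : Fin n → ℕ)
    (hpark : ∀ I : Finset (Fin n), I.Nonempty →
      ∃ i ∈ I, f i ≤ ∑ j ∈ Iᶜ, (A.filter (fun h => h.1 = i ∧ h.2.1 = j)).card)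
    (hle : ∀ i, (A.filter (fun h => h.1 = i ∧ r h.1 - r h.2.1 > h.2.2)).card ≤ f i)
    (I : Finset (Fin n))
    (hIdef : I = Finset.univ.filter fun i =>
      (A.filter (fun h => h.1 = i ∧ r h.1 - r h.2.1 > h.2.2)).card < f i)
    (hIne : I.Nonempty)
    (hsep : ∀ h ∈ A, h.1 ∈ I → h.2.1 ∈ I → r h.1 - r h.2.1 < h.2.2) :
    ∃ h ∈ A, h.1 ∈ I ∧ h.2.1 ∉ I ∧ r h.1 - r h.2.1 < h.2.2 :=
  stmt11_general n A r hcompl f hpark I hIdef hIne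
end
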